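/- Let Q be a connected quandle. Suppose the quotient of Q by the congruence λ_Q (where a λ_Q b iff L a = L b) is principal, i.e. for every h ∈ Dis(Q) and every a ∈ Q, if L (h a) = L a then L (h b) = L b for all b ∈ Q. Then Q is principal: every h ∈ Dis(Q) fixing some point of Q is the identity. -/

import Mathlib

open Quandles

/-- Left multiplication by `a` as a permutation of the quandle. -/
def QL {Q : Type*} [Quandle Q] (a : Q) : Equiv.Perm Q := Rack.act' a

/-- The displacement group of a quandle: the subgroup of `Equiv.Perm Q`
generated by `{L a * (L b)⁻¹ : a, b ∈ Q}`. -/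
def Dis (Q : Type*) [Quandle Q] : Subgroup (Equiv.Perm Q) :=
  Subgroup.closure {g : Equiv.Perm Q | ∃ a b : Q, g = QL a * (QL b)⁻¹}

theorem Equiv.Perm.apply_inv_self {α : Type*} (f : Equiv.Perm α) (x : α) : f (f⁻¹ x) = x :=
  f.apply_symm_apply x

lemma QL_apply {Q : Type*} [Quandle Q] (a x : Q) : QL a x = a ◃ x := rfl

lemma dis_act {Q : Type*} [Quandle Q] (h : Equiv.Perm Q) (hh : h ∈ Dis Q) :
    ∀ x y : Q, h (x ◃ y) = h x ◃ h y := by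
  have inv_act : ∀ g : Equiv.Perm Q, (∀ x y : Q, g (x ◃ y) = g x ◃ g y) →
      ∀ x y : Q, g⁻¹ (x ◃ y) = g⁻¹ x ◃ g⁻¹ y := by
    intro g hg x y
    apply g.injective
    rw [hg, Equiv.Perm.apply_inv_self, Equiv.Perm.apply_inv_self, Equiv.Perm.apply_inv_self]
  refine Subgroup.closure_induction (fun g hg => ?_) ?_
    (fun g g' _ _ ihg ihg' x y => ?_) (fun g _ ihg => inv_act g ihg) hh
  · obtain ⟨a, b, rfl⟩ := hg
    intro x y
    have hb : ∀ x y : Q, (QL b)⁻¹ (x ◃ y) = (QL b)⁻¹ x ◃ (QL b)⁻¹ y := by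
      apply inv_act
      intro x y
      simp only [QL_apply]
      exact Shelf.self_distrib
    simp only [Equiv.Perm.mul_apply, hb, QL_apply]
    exact Shelf.self_distrib
  · intro x y; rfl
  · simp only [Equiv.Perm.mul_apply, ihg', ihg]

theorem stmt16 (Q : Type*) [Quandle Q]
    (hconn : ∀ x y : Q, ∃ g ∈ Dis Q, g x = y)
    (hprin : ∀ h : Equiv.Perm Q, h ∈ Dis Q →
      ∀ a : Q, QL (h a) = QL a → ∀ b : Q, QL (h b) = QL b) :
    ∀ h : Equiv.Perm Q, h ∈ Dis Q → ∀ a : Q, h a = a → h = 1 := by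
  intro h hh a ha
  have hL : ∀ b : Q, QL (h b) = QL b := hprin h hh a (by rw [ha])
  -- h commutes with every L b
  have hcommL : ∀ b z : Q, h (b ◃ z) = b ◃ h z := by
    intro b z
    rw [dis_act h hh b z, ← QL_apply (h b), hL b, QL_apply]
  have hcomm : ∀ g : Equiv.Perm Q, g ∈ Dis Q → ∀ z : Q, h (g z) = g (h z) := by
    intro g hg
    have inv_step : ∀ g : Equiv.Perm Q, (∀ z : Q, h (g z) = g (h z)) →
        ∀ z : Q, h (g⁻¹ z) = g⁻¹ (h z) := by
      intro g hgc z
      apply g.injective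
      rw [← hgc, Equiv.Perm.apply_inv_self, Equiv.Perm.apply_inv_self]
    refine Subgroup.closure_induction (fun g hg => ?_) (fun z => rfl)
      (fun g g' _ _ ihg ihg' z => ?_) (fun g _ ihg => inv_step g ihg) hg
    · obtain ⟨b, c, rfl⟩ := hg
      intro z
      have hc : ∀ z : Q, h ((QL c)⁻¹ z) = (QL c)⁻¹ (h z) :=
        inv_step (QL c) (fun z => hcommL c z)
      simp only [Equiv.Perm.mul_apply, QL_apply]
      rw [hcommL, hc]
    · simp only [Equiv.Perm.mul_apply, ihg', ihg]
  ext x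
  obtain ⟨g, hg, hgx⟩ := hconn a x
  simp only [Equiv.Perm.one_apply]
  rw [← hgx, hcomm g hg, ha]
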